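/- arXiv:2410.02124 — 2 statements merged into one kernel-verified Lean document; each statement's English description precedes it below -/
import Mathlib

section
/- Let G be a finite connected simple graph with minimum degree at least c, where c ≥ 6, and let ρ be a rotation system on G. Let g be the genus of (G,ρ), let v⁺ = |V(G)| − (c+1) (the vertex excess), and let f⁺ = Σ_{faces F} (length(F) − 3) (the face excess). Then g ≥ ⌈((c−2)(c−3) + (c−6)·v⁺ + 2·f⁺)/12⌉, where the fraction is a rational number and ⌈·⌉ is the ceiling. -/
namespace DualSep

open SimpleGraph

variable {V : Type*} [Fintype V] [DecidableEq V]

/-- The dart-reversal permutation of a simple graph. -/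
def dartRev (G : SimpleGraph V) : Equiv.Perm G.Dart :=
  Function.Involutive.toPerm SimpleGraph.Dart.symm SimpleGraph.Dart.symm_involutive

/-- `ρ` is a rotation system on `G`: it permutes the darts, preserves the initial vertex of
each dart, and the darts leaving any fixed vertex form a single orbit. -/
structure IsRotationSystem (G : SimpleGraph V) (ρ : Equiv.Perm G.Dart) : Prop where
  fst_fixed : ∀ d : G.Dart, (ρ d).fst = d.fst
  single_orbit : ∀ d d' : G.Dart, d.fst = d'.fst → ∃ n : ℕ, (ρ ^ n) d = d'

/-- The face permutation `φ = ρ ∘ rev` of a rotation system. -/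
def facePerm {G : SimpleGraph V} (ρ : Equiv.Perm G.Dart) : Equiv.Perm G.Dart :=
  ρ * dartRev G

/-- The face (orbit of the face permutation) containing a given dart. -/
def faceOf {G : SimpleGraph V} (ρ : Equiv.Perm G.Dart) (d : G.Dart) : Set G.Dart :=
  {d' | (facePerm ρ).SameCycle d d'}

/-- The set of faces of `(G, ρ)`. -/
def faces {G : SimpleGraph V} (ρ : Equiv.Perm G.Dart) : Set (Set G.Dart) :=
  Set.range (faceOf ρ)

/-- The dual graph is simple: no dual edge joins a face to itself, and no two distinct
faces are joined by more than one dual edge. -/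
def DualSimple {G : SimpleGraph V} (ρ : Equiv.Perm G.Dart) : Prop :=
  (∀ d : G.Dart, faceOf ρ d ≠ faceOf ρ d.symm) ∧
  (∀ d d' : G.Dart, d.edge ≠ d'.edge →
    ¬(faceOf ρ d = faceOf ρ d' ∧ faceOf ρ d.symm = faceOf ρ d'.symm) ∧
    ¬(faceOf ρ d = faceOf ρ d'.symm ∧ faceOf ρ d.symm = faceOf ρ d'))

/-- The dual graph of `(G, ρ)`, as a simple graph on the set of faces: two distinct faces
are adjacent when some edge of `G` induces a dual edge between them. -/
def dualGraph {G : SimpleGraph V} (ρ : Equiv.Perm G.Dart) : SimpleGraph (faces ρ) where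
  Adj F₁ F₂ := F₁ ≠ F₂ ∧
    ∃ d : G.Dart, faceOf ρ d = (F₁ : Set G.Dart) ∧ faceOf ρ d.symm = (F₂ : Set G.Dart)
  symm := ⟨by
    rintro F₁ F₂ ⟨hne, d, h1, h2⟩
    exact ⟨hne.symm, d.symm, h2, by rwa [SimpleGraph.Dart.symm_symm]⟩⟩
  loopless := ⟨by rintro F ⟨hne, -⟩; exact hne rfl⟩

/-- `C` is a cutface: a face whose removal disconnects the dual graph. -/
def IsCutface {G : SimpleGraph V} (ρ : Equiv.Perm G.Dart) (C : Set G.Dart) : Prop :=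
  C ∈ faces ρ ∧
    ¬((dualGraph ρ).induce {F : faces ρ | (F : Set G.Dart) ≠ C}).Connected

end DualSep

/-
Double counting darts, the face lengths sum to `2|E|`, so the face excess is `2|E| - 3|F|`,
and the degree bound gives `c|V| ≤ 2|E|`. Since `(c-2)(c-3) + (c-6)(|V|-c-1) = (c-6)|V| + 12`,
the fraction is at most `(6|E| - 6|V| - 6|F| + 12) / 12 = g` by Euler's formula.
-/

theorem Equiv.Perm.finsum_mem_range_ncard_sameCycle {α : Type*} [Fintype α]
    (σ : Equiv.Perm α) :
    ∑ᶠ S ∈ Set.range (fun a => {b | σ.SameCycle a b}), S.ncard = Fintype.card α := by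
  classical
  set orbit : α → Set α := fun a => {b | σ.SameCycle a b}
  have hfiber : ∀ a, {b | orbit b = orbit a} = orbit a := by
    intro a
    ext b
    constructor
    · intro hb
      have hbb : b ∈ orbit b := Equiv.Perm.SameCycle.refl σ b
      rwa [Set.mem_ofPred_eq.mp hb] at hbb
    · intro hab
      ext x
      exact ⟨fun hbx => (hab : σ.SameCycle a b).trans hbx, fun hax => hab.symm.trans hax⟩
  rw [← Set.image_univ, ← Finset.coe_univ, ← Finset.coe_image, finsum_mem_coe_finset,
    ← Finset.card_univ, Finset.card_eq_sum_card_image orbit Finset.univ]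
  refine Finset.sum_congr rfl fun S hS => ?_
  obtain ⟨a, -, rfl⟩ := Finset.mem_image.mp hS
  rw [← Set.ncard_coe_finset, Finset.coe_filter_univ, hfiber]

namespace DualSep

open SimpleGraph

variable {V : Type*} [Fintype V] {G : SimpleGraph V}

theorem finite_faces (ρ : Equiv.Perm G.Dart) : (faces ρ).Finite := by
  classical
  exact Set.finite_range _

theorem finsum_mem_faces_ncard (ρ : Equiv.Perm G.Dart) :
    ∑ᶠ F ∈ faces ρ, F.ncard = 2 * G.edgeSet.ncard := by
  classical
  rw [faces, show faceOf ρ = fun d => {d' | (facePerm ρ).SameCycle d d'} from rfl,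
    Equiv.Perm.finsum_mem_range_ncard_sameCycle, dart_card_eq_twice_card_edges,
    ← coe_edgeFinset, Set.ncard_coe_finset]

theorem finsum_mem_faces_ncard_sub_three (ρ : Equiv.Perm G.Dart) :
    ∑ᶠ F ∈ faces ρ, ((F.ncard : ℚ) - 3) = 2 * G.edgeSet.ncard - 3 * (faces ρ).ncard := by
  have hfin := finite_faces ρ
  have hconst : ∑ᶠ F ∈ faces ρ, (3 : ℚ) = 3 * (faces ρ).ncard := by
    simp [finsum_mem_eq_finite_toFinset_sum _ hfin, Set.ncard_eq_toFinset_card _ hfin, mul_comm]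
  rw [finsum_mem_sub_distrib _ _ hfin, ← Nat.cast_finsum_mem hfin, finsum_mem_faces_ncard,
    hconst]
  push_cast
  ring

end DualSep

theorem SimpleGraph.mul_card_le_two_mul_ncard_edgeSet {V : Type*} [Fintype V]
    (G : SimpleGraph V) (c : ℕ) (hdeg : ∀ v : V, c ≤ (G.neighborSet v).ncard) :
    c * Fintype.card V ≤ 2 * G.edgeSet.ncard := by
  classical
  rw [← coe_edgeFinset, Set.ncard_coe_finset, ← sum_degrees_eq_twice_card_edges,
    mul_comm, ← smul_eq_mul, ← Finset.card_univ]
  refine Finset.card_nsmul_le_sum _ _ _ fun v _ => ?_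
  rw [← card_neighborSet_eq_degree, ← Nat.card_eq_fintype_card]
  exact hdeg v

open DualSep in
theorem stmt0_general {V : Type*} [Fintype V] (G : SimpleGraph V)
    (c : ℕ)
    (hdeg : ∀ v : V, c ≤ (G.neighborSet v).ncard)
    (ρ : Equiv.Perm G.Dart)
    (g : ℤ)
    (hEuler : (Fintype.card V : ℤ) - (G.edgeSet.ncard : ℤ) + ((faces ρ).ncard : ℤ)
      = 2 - 2 * g) :
    g ≥ ⌈(((c : ℚ) - 2) * ((c : ℚ) - 3)
          + ((c : ℚ) - 6) * ((Fintype.card V : ℚ) - ((c : ℚ) + 1))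
          + 2 * ∑ᶠ F ∈ faces ρ, ((F.ncard : ℚ) - 3)) / 12⌉ := by
  have hdegQ : (c : ℚ) * Fintype.card V ≤ 2 * G.edgeSet.ncard := by
    exact_mod_cast G.mul_card_le_two_mul_ncard_edgeSet c hdeg
  have hEulerQ : (Fintype.card V : ℚ) - G.edgeSet.ncard + (faces ρ).ncard = 2 - 2 * g := by
    exact_mod_cast hEuler
  rw [ge_iff_le, Int.ceil_le, finsum_mem_faces_ncard_sub_three]
  linarith

open DualSep in
/-- Lemma 2 of Brinkmann–Noguchi–Van den Camp: Euler-formula lower bound on the genus in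
terms of the vertex excess `|V| - (c+1)` and face excess `∑_F (length F - 3)`. -/
theorem stmt0 {V : Type*} [Fintype V] [DecidableEq V] (G : SimpleGraph V)
    (hconn : G.Connected) (c : ℕ) (hc : 6 ≤ c)
    (hdeg : ∀ v : V, c ≤ (G.neighborSet v).ncard)
    (ρ : Equiv.Perm G.Dart) (hρ : IsRotationSystem G ρ)
    (g : ℤ)
    (hEuler : (Fintype.card V : ℤ) - (G.edgeSet.ncard : ℤ) + ((faces ρ).ncard : ℤ)
      = 2 - 2 * g) :
    g ≥ ⌈(((c : ℚ) - 2) * ((c : ℚ) - 3)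
          + ((c : ℚ) - 6) * ((Fintype.card V : ℚ) - ((c : ℚ) + 1))
          + 2 * ∑ᶠ F ∈ faces ρ, ((F.ncard : ℚ) - 3)) / 12⌉ :=
  stmt0_general G c hdeg ρ g hEuler
end

section
/- Let n ≥ 9 and let ρ be a rotation system on the complete graph K_n whose dual graph is simple and which has a cutface C. Then the length of the face C is at least 15. -/
/-!
Removing `C` from the dual graph leaves at least two components. Since any two vertices of
`K_n` are adjacent, the set `A` of faces of one of them surrounds no vertex together with `C`
alone. Let `S` be the set of vertices on faces of `A` and `s = |S|`. Around a vertex of `S`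
the rotation can only pass between `A` and the remaining faces through `C`, so at least two
darts opposite `C` start there, one of them on a face of `A`. As the dual is simple, every face
of `A` has length at least `3` and shares at most one edge with `C`. There are at most
`s (s - 1)` darts with both ends in `S`, and counting them gives `|C| ≥ 15` unless `s = 7`,
`|C| = 14` and the faces of `A` are triangles `e, φ e, φ² e` with `e` on `C`. In that case the
triangle across `φ e` is again entered along its second edge, since otherwise some vertex of
`S` would carry three darts between faces of `A`; this pairs up the seven triangles.
-/

namespace DualSep

open SimpleGraph Finset

lemma even_card_of_involution {α : Type*} {s : Finset α} (f : α → α)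
    (hf : ∀ x ∈ s, f x ∈ s) (hff : ∀ x ∈ s, f (f x) = x) (hne : ∀ x ∈ s, f x ≠ x) :
    Even #s := by
  have hinv : Function.Involutive fun x : s => (⟨f x, hf x x.2⟩ : s) :=
    fun x => Subtype.ext (hff x x.2)
  have hσ : hinv.toPerm ^ 2 ^ 1 = 1 := by
    rw [pow_one, sq]
    exact Equiv.ext hinv
  by_contra hodd
  obtain ⟨x, hx⟩ := Equiv.Perm.exists_fixed_point_of_prime (p := 2)
    (by simpa [even_iff_two_dvd] using hodd) hσ
  exact hne x x.2 (congrArg Subtype.val hx)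

variable {V : Type*} {G : SimpleGraph V} {ρ : Equiv.Perm G.Dart}

lemma facePerm_apply (d : G.Dart) : facePerm ρ d = ρ d.symm := rfl

lemma faceOf_eq_faceOf_iff {d d' : G.Dart} :
    faceOf ρ d = faceOf ρ d' ↔ (facePerm ρ).SameCycle d d' := by
  refine ⟨fun h => ?_, fun h => Set.ext fun e => ⟨h.symm.trans, h.trans⟩⟩
  have : d' ∈ faceOf ρ d' := Equiv.Perm.SameCycle.refl _ _
  rwa [← h] at this

lemma mem_faceOf_iff {d d' : G.Dart} : d' ∈ faceOf ρ d ↔ faceOf ρ d' = faceOf ρ d :=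
  ⟨fun h => faceOf_eq_faceOf_iff.2 h.symm, fun h => (faceOf_eq_faceOf_iff.1 h).symm⟩

@[simp]
lemma faceOf_facePerm_pow (k : ℕ) (d : G.Dart) : faceOf ρ ((facePerm ρ ^ k) d) = faceOf ρ d :=
  faceOf_eq_faceOf_iff.2 (Equiv.Perm.SameCycle.refl _ _).pow_left

@[simp]
lemma faceOf_facePerm (d : G.Dart) : faceOf ρ (facePerm ρ d) = faceOf ρ d := by
  simpa using faceOf_facePerm_pow 1 d

@[simp]
lemma faceOf_apply (d : G.Dart) : faceOf ρ (ρ d) = faceOf ρ d.symm := by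
  simpa [facePerm_apply] using faceOf_facePerm (ρ := ρ) d.symm

namespace IsRotationSystem

variable (hρ : IsRotationSystem G ρ)
include hρ

lemma fst_facePerm (d : G.Dart) : (facePerm ρ d).fst = d.snd :=
  hρ.fst_fixed d.symm

lemma facePerm_apply_ne (d : G.Dart) : facePerm ρ d ≠ d := by
  intro h
  have hfst := hρ.fst_facePerm d
  rw [h] at hfst
  exact d.fst_ne_snd hfst

lemma fst_pow_apply (k : ℕ) (d : G.Dart) : ((ρ ^ k) d).fst = d.fst := by
  induction k with
  | zero => rfl
  | succ k ih => rw [pow_succ', Equiv.Perm.mul_apply, hρ.fst_fixed, ih]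

lemma exists_transition {P : G.Dart → Prop} {d₀ d₁ : G.Dart} (hfst : d₀.fst = d₁.fst)
    (h₀ : P d₀) (h₁ : ¬P d₁) : ∃ d, d.fst = d₀.fst ∧ P d ∧ ¬P (ρ d) := by
  by_contra! hcon
  have hall : ∀ k, P ((ρ ^ k) d₀) := by
    intro k
    induction k with
    | zero => exact h₀
    | succ k ih =>
      rw [pow_succ', Equiv.Perm.mul_apply]
      exact hcon _ (hρ.fst_pow_apply k d₀) ih
  obtain ⟨k, rfl⟩ := hρ.single_orbit d₀ d₁ hfst
  exact h₁ (hall k)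

end IsRotationSystem

namespace DualSimple

variable (hs : DualSimple ρ)
include hs

lemma faceOf_symm_ne (d : G.Dart) : faceOf ρ d.symm ≠ faceOf ρ d :=
  (hs.1 d).symm

lemma eq_of_faceOf_eq {d d' : G.Dart} (h : faceOf ρ d = faceOf ρ d')
    (hsymm : faceOf ρ d.symm = faceOf ρ d'.symm) : d = d' := by
  by_cases he : d.edge = d'.edge
  · rcases (dart_edge_eq_iff d d').1 he with rfl | rfl
    · rfl
    · exact absurd h.symm (hs.1 d')
  · exact absurd ⟨h, hsymm⟩ (hs.2 d d' he).1

lemma facePerm_apply_ne_symm (d : G.Dart) : facePerm ρ d ≠ d.symm := fun h =>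
  hs.faceOf_symm_ne d (by rw [← h, faceOf_facePerm])

lemma facePerm_sq_apply_ne (hρ : IsRotationSystem G ρ) (d : G.Dart) :
    facePerm ρ (facePerm ρ d) ≠ d := by
  intro h
  refine hs.facePerm_apply_ne_symm d (Dart.ext _ _ (Prod.ext (hρ.fst_facePerm d) ?_))
  simpa [h] using (hρ.fst_facePerm (facePerm ρ d)).symm

lemma facePerm_pow_apply_ne (hρ : IsRotationSystem G ρ) (d : G.Dart) {j : ℕ} (hj : 0 < j)
    (hj3 : j < 3) : (facePerm ρ ^ j) d ≠ d := by
  interval_cases j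
  · exact hρ.facePerm_apply_ne d
  · exact hs.facePerm_sq_apply_ne hρ d

lemma facePerm_pow_injOn (hρ : IsRotationSystem G ρ) (d : G.Dart) :
    Set.InjOn (fun k => (facePerm ρ ^ k) d) (Set.Iio 3) := by
  have hlt : ∀ k k', k < k' → k' < 3 → (facePerm ρ ^ k) d ≠ (facePerm ρ ^ k') d := by
    intro k k' hkk' hk' h
    refine hs.facePerm_pow_apply_ne hρ ((facePerm ρ ^ k) d) (j := k' - k) (by omega) (by omega) ?_
    rw [← Equiv.Perm.mul_apply, ← pow_add, Nat.sub_add_cancel hkk'.le, h]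
  intro k hk k' hk' h
  simp only [Set.mem_Iio] at hk hk'
  rcases lt_trichotomy k k' with hkk' | hkk' | hkk'
  · exact absurd h (hlt k k' hkk' hk')
  · exact hkk'
  · exact absurd h.symm (hlt k' k hkk' hk)

end DualSimple

/-- What the counting argument uses of the faces of one component of the dual graph
minus `C` (see `exists_isSide_of_isCutface`). -/
structure IsSide (ρ : Equiv.Perm G.Dart) (C : Set G.Dart) (A : Set (Set G.Dart)) : Prop where
  exists_faceOf_mem : ∃ d, faceOf ρ d ∈ A
  not_mem : C ∉ A
  faceOf_symm_mem : ∀ d, faceOf ρ d ∈ A → faceOf ρ d.symm ≠ C → faceOf ρ d.symm ∈ A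
  exists_outside : ∀ v, ∃ d : G.Dart, d.fst = v ∧ faceOf ρ d ∉ A ∧ faceOf ρ d ≠ C

variable {C : Set G.Dart} {A : Set (Set G.Dart)}

namespace IsSide

variable (hA : IsSide ρ C A) (hρ : IsRotationSystem G ρ)
include hA hρ

lemma exists_boundary {v : V} (hv : ∃ d : G.Dart, faceOf ρ d ∈ A ∧ d.fst = v) :
    ∃ d : G.Dart, d.fst = v ∧ faceOf ρ d ∈ A ∧ faceOf ρ d.symm = C := by
  obtain ⟨d₀, hd₀, rfl⟩ := hv
  obtain ⟨d₁, hd₁, hd₁A, -⟩ := hA.exists_outside d₀.fst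
  obtain ⟨d, hd, hdA, hρd⟩ :=
    hρ.exists_transition (P := fun d => faceOf ρ d ∈ A) hd₁.symm hd₀ hd₁A
  rw [faceOf_apply] at hρd
  exact ⟨d, hd, hdA, not_not.1 fun h => hρd (hA.faceOf_symm_mem d hdA h)⟩

lemma exists_outer {v : V} (hv : ∃ d : G.Dart, faceOf ρ d ∈ A ∧ d.fst = v) :
    ∃ d : G.Dart, d.fst = v ∧ faceOf ρ d ∉ A ∧ faceOf ρ d.symm = C := by
  obtain ⟨d₀, hd₀, rfl⟩ := hv
  obtain ⟨d₁, hd₁, hd₁A, hd₁C⟩ := hA.exists_outside d₀.fst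
  obtain ⟨d, hd, ⟨hdA, hdC⟩, hρd⟩ :=
    hρ.exists_transition (P := fun d => faceOf ρ d ∉ A ∧ faceOf ρ d ≠ C) hd₁ ⟨hd₁A, hd₁C⟩
      fun h => h.1 hd₀
  rw [faceOf_apply] at hρd
  refine ⟨d, hd.trans hd₁, hdA, not_not.1 fun hC => hρd ⟨fun hA' => hdA ?_, hC⟩⟩
  simpa using hA.faceOf_symm_mem d.symm hA' (by simpa using hdC)

end IsSide

abbrev dualGraphDelete (ρ : Equiv.Perm G.Dart) (C : Set G.Dart) :=
  (dualGraph ρ).induce {F : faces ρ | (F : Set G.Dart) ≠ C}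

def componentFaces (K : (dualGraphDelete ρ C).ConnectedComponent) : Set (Set G.Dart) :=
  (fun F => F.1.1) '' K.supp

lemma exists_faceOf_mem_componentFaces (K : (dualGraphDelete ρ C).ConnectedComponent) :
    ∃ d, faceOf ρ d ∈ componentFaces K := by
  obtain ⟨F, rfl⟩ := K.exists_rep
  obtain ⟨d, hd⟩ := F.1.2
  exact ⟨d, F, rfl, hd.symm⟩

lemma not_mem_componentFaces (K : (dualGraphDelete ρ C).ConnectedComponent) :
    C ∉ componentFaces K := by
  rintro ⟨F, -, hF⟩
  exact F.2 hF

lemma faceOf_symm_mem_componentFaces (hs : DualSimple ρ)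
    {K : (dualGraphDelete ρ C).ConnectedComponent} {d : G.Dart}
    (hd : faceOf ρ d ∈ componentFaces K) (hC : faceOf ρ d.symm ≠ C) :
    faceOf ρ d.symm ∈ componentFaces K := by
  obtain ⟨F, hFK, hF⟩ := hd
  let F' : {F : faces ρ | (F : Set G.Dart) ≠ C} := ⟨⟨faceOf ρ d.symm, d.symm, rfl⟩, hC⟩
  have hadj : (dualGraphDelete ρ C).Adj F F' := by
    refine ⟨fun h => hs.faceOf_symm_ne d ?_, d, hF.symm, rfl⟩
    rw [← hF]
    exact congrArg Subtype.val h.symm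
  refine ⟨F', ?_, rfl⟩
  rw [ConnectedComponent.mem_supp_iff] at hFK ⊢
  rw [← hFK]
  exact ConnectedComponent.eq.2 hadj.reachable.symm

lemma disjoint_componentFaces {K K' : (dualGraphDelete ρ C).ConnectedComponent} (h : K ≠ K') :
    Disjoint (componentFaces K) (componentFaces K') := by
  rw [Set.disjoint_left]
  rintro _ ⟨F, hFK, rfl⟩ ⟨F', hFK', hFF'⟩
  obtain rfl : F' = F := Subtype.ext (Subtype.ext hFF')
  exact h (hFK.symm.trans hFK')

/-- In a complete graph, two disjoint sets of faces cannot each surround a vertex together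
with `C`. -/
lemma false_of_surrounded [Nontrivial V] {ρ : Equiv.Perm (⊤ : SimpleGraph V).Dart}
    {C : Set (⊤ : SimpleGraph V).Dart} (hρ : IsRotationSystem ⊤ ρ) (hs : DualSimple ρ)
    {A₀ A₁ : Set (Set (⊤ : SimpleGraph V).Dart)} (hdisj : Disjoint A₀ A₁) {v₀ v₁ : V}
    (h₀ : ∀ d : (⊤ : SimpleGraph V).Dart, d.fst = v₀ → faceOf ρ d ∉ A₀ → faceOf ρ d = C)
    (h₁ : ∀ d : (⊤ : SimpleGraph V).Dart, d.fst = v₁ → faceOf ρ d ∉ A₁ → faceOf ρ d = C) :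
    False := by
  have hC : ∀ d d' : (⊤ : SimpleGraph V).Dart, d.fst = v₀ → d'.fst = v₁ →
      faceOf ρ d = faceOf ρ d' → faceOf ρ d = C := by
    intro d d' hd hd' hdd'
    by_contra hne
    refine Set.disjoint_left.1 hdisj (not_not.1 fun h => hne (h₀ d hd h)) ?_
    rw [hdd']
    exact not_not.1 fun h => hne (hdd'.trans (h₁ d' hd' h))
  by_cases hv : v₀ = v₁
  · subst hv
    obtain ⟨u, hu⟩ := exists_ne v₀
    let d : (⊤ : SimpleGraph V).Dart := ⟨(v₀, u), hu.symm⟩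
    have hρd : faceOf ρ (ρ d) = C := hC _ _ (hρ.fst_fixed d) (hρ.fst_fixed d) rfl
    rw [faceOf_apply] at hρd
    exact hs.faceOf_symm_ne d (hρd.trans (hC d d rfl rfl rfl).symm)
  · let d : (⊤ : SimpleGraph V).Dart := ⟨(v₀, v₁), hv⟩
    have hd : faceOf ρ d = C := hC d (facePerm ρ d) rfl (hρ.fst_facePerm d) (by simp)
    have hd' : faceOf ρ d.symm = C := by
      simpa using hC (facePerm ρ d.symm) d.symm (hρ.fst_facePerm d.symm) rfl (by simp)
    exact hs.faceOf_symm_ne d (hd'.trans hd.symm)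

lemma exists_isSide_of_isCutface [Nontrivial V] {ρ : Equiv.Perm (⊤ : SimpleGraph V).Dart}
    {C : Set (⊤ : SimpleGraph V).Dart} (hρ : IsRotationSystem ⊤ ρ) (hs : DualSimple ρ)
    (hC : IsCutface ρ C) : ∃ A, IsSide ρ C A := by
  obtain ⟨⟨c, rfl⟩, hdisc⟩ := hC
  have : Nonempty {F : faces ρ | (F : Set _) ≠ faceOf ρ c} :=
    ⟨⟨⟨faceOf ρ c.symm, c.symm, rfl⟩, hs.faceOf_symm_ne c⟩⟩
  have hpre : ¬(dualGraphDelete ρ (faceOf ρ c)).Preconnected := fun h => hdisc ⟨h⟩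
  simp only [Preconnected, not_forall] at hpre
  obtain ⟨x, y, hxy⟩ := hpre
  have hside : ∀ K : (dualGraphDelete ρ (faceOf ρ c)).ConnectedComponent,
      (∀ v, ∃ d : (⊤ : SimpleGraph V).Dart, d.fst = v ∧ faceOf ρ d ∉ componentFaces K ∧
        faceOf ρ d ≠ faceOf ρ c) → IsSide ρ (faceOf ρ c) (componentFaces K) :=
    fun K h => ⟨exists_faceOf_mem_componentFaces K, not_mem_componentFaces K,
      fun _ hd hC => faceOf_symm_mem_componentFaces hs hd hC, h⟩
  by_cases h₀ : ∀ v, ∃ d : (⊤ : SimpleGraph V).Dart, d.fst = v ∧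
      faceOf ρ d ∉ componentFaces (connectedComponentMk _ x) ∧ faceOf ρ d ≠ faceOf ρ c
  · exact ⟨_, hside _ h₀⟩
  refine ⟨_, hside (connectedComponentMk _ y) fun v₁ => ?_⟩
  by_contra h₁
  push Not at h₀ h₁
  obtain ⟨v₀, h₀⟩ := h₀
  exact false_of_surrounded hρ hs (disjoint_componentFaces (mt ConnectedComponent.eq.1 hxy)) h₀ h₁

section Counting

open scoped Classical

variable [Fintype V]

noncomputable def sideDarts (ρ : Equiv.Perm G.Dart) (A : Set (Set G.Dart)) : Finset G.Dart :=
  {d | faceOf ρ d ∈ A}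

noncomputable def sideVerts (ρ : Equiv.Perm G.Dart) (A : Set (Set G.Dart)) : Finset V :=
  (sideDarts ρ A).image (·.fst)

noncomputable def boundaryDarts (ρ : Equiv.Perm G.Dart) (C : Set G.Dart)
    (A : Set (Set G.Dart)) : Finset G.Dart :=
  {d | faceOf ρ d ∈ A ∧ faceOf ρ d.symm = C}

noncomputable def innerDarts (ρ : Equiv.Perm G.Dart) (A : Set (Set G.Dart)) : Finset G.Dart :=
  {d | faceOf ρ d ∈ A ∧ faceOf ρ d.symm ∈ A}

noncomputable def faceDarts (ρ : Equiv.Perm G.Dart) (C : Set G.Dart) : Finset G.Dart :=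
  {d | faceOf ρ d = C}

noncomputable def oppDarts (ρ : Equiv.Perm G.Dart) (C : Set G.Dart) : Finset G.Dart :=
  {d | faceOf ρ d.symm = C}

noncomputable def edgeDarts (ρ : Equiv.Perm G.Dart) (C : Set G.Dart) : Finset G.Dart :=
  {d | faceOf ρ d = C ∨ faceOf ρ d.symm = C}

@[simp] lemma mem_sideDarts {d : G.Dart} : d ∈ sideDarts ρ A ↔ faceOf ρ d ∈ A := by
  simp [sideDarts]

lemma mem_sideVerts {v : V} :
    v ∈ sideVerts ρ A ↔ ∃ d : G.Dart, faceOf ρ d ∈ A ∧ d.fst = v := by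
  simp [sideVerts]

@[simp] lemma mem_boundaryDarts {d : G.Dart} :
    d ∈ boundaryDarts ρ C A ↔ faceOf ρ d ∈ A ∧ faceOf ρ d.symm = C := by
  simp [boundaryDarts]

@[simp] lemma mem_innerDarts {d : G.Dart} :
    d ∈ innerDarts ρ A ↔ faceOf ρ d ∈ A ∧ faceOf ρ d.symm ∈ A := by
  simp [innerDarts]

@[simp] lemma mem_faceDarts {d : G.Dart} : d ∈ faceDarts ρ C ↔ faceOf ρ d = C := by
  simp [faceDarts]

@[simp] lemma mem_oppDarts {d : G.Dart} : d ∈ oppDarts ρ C ↔ faceOf ρ d.symm = C := by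
  simp [oppDarts]

@[simp] lemma mem_edgeDarts {d : G.Dart} :
    d ∈ edgeDarts ρ C ↔ faceOf ρ d = C ∨ faceOf ρ d.symm = C := by
  simp [edgeDarts]

lemma fst_mem_sideVerts {d : G.Dart} (hd : faceOf ρ d ∈ A) : d.fst ∈ sideVerts ρ A :=
  mem_sideVerts.2 ⟨d, hd, rfl⟩

lemma snd_mem_sideVerts (hρ : IsRotationSystem G ρ) {d : G.Dart} (hd : faceOf ρ d ∈ A) :
    d.snd ∈ sideVerts ρ A :=
  mem_sideVerts.2 ⟨facePerm ρ d, by simpa using hd, hρ.fst_facePerm d⟩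

lemma card_oppDarts : #(oppDarts ρ C) = #(faceDarts ρ C) :=
  card_equiv (dartRev G) fun d => by simp [dartRev]

/-- The rotation `ρ` maps the darts opposite `C` at a vertex onto the darts of `C` there. -/
lemma card_faceDarts_filter_fst (hρ : IsRotationSystem G ρ) (q : V → Prop) [DecidablePred q] :
    #{d ∈ faceDarts ρ C | q d.fst} = #{d ∈ oppDarts ρ C | q d.fst} :=
  (card_equiv ρ fun d => by simp [hρ.fst_fixed]).symm

lemma card_edgeDarts_filter_fst (hρ : IsRotationSystem G ρ) (hs : DualSimple ρ) (q : V → Prop)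
    [DecidablePred q] :
    #{d ∈ edgeDarts ρ C | q d.fst} = 2 * #{d ∈ oppDarts ρ C | q d.fst} := by
  have hunion : {d ∈ edgeDarts ρ C | q d.fst} =
      {d ∈ faceDarts ρ C | q d.fst} ∪ {d ∈ oppDarts ρ C | q d.fst} := by
    ext d
    simp only [mem_filter, mem_union, mem_edgeDarts, mem_faceDarts, mem_oppDarts]
    tauto
  have hdisj : Disjoint {d ∈ faceDarts ρ C | q d.fst} {d ∈ oppDarts ρ C | q d.fst} := by
    refine disjoint_left.2 fun d hd hd' => ?_
    simp only [mem_filter, mem_faceDarts, mem_oppDarts] at hd hd'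
    exact hs.faceOf_symm_ne d (hd'.1.trans hd.1.symm)
  rw [hunion, card_union_of_disjoint hdisj, card_faceDarts_filter_fst hρ]
  ring

lemma card_darts_fst_snd_mem_le (W : Finset V) :
    #{d : G.Dart | d.fst ∈ W ∧ d.snd ∈ W} ≤ #W * #W - #W := by
  rw [← offDiag_card]
  refine card_le_card_of_injOn Dart.toProd (fun d hd => ?_) Dart.toProd_injective.injOn
  obtain ⟨h₁, h₂⟩ : d.fst ∈ W ∧ d.snd ∈ W := by simpa using hd
  exact mem_coe.2 (mem_offDiag.2 ⟨h₁, h₂, d.fst_ne_snd⟩)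

lemma card_darts_fst_eq_snd_mem_le {W : Finset V} {v : V} (hv : v ∈ W) :
    #{d : G.Dart | d.fst = v ∧ d.snd ∈ W} ≤ #W - 1 := by
  rw [← card_erase_of_mem hv]
  refine card_le_card_of_injOn (·.snd) (fun d hd => ?_) fun d hd d' hd' h => ?_
  · obtain ⟨rfl, h⟩ : d.fst = v ∧ d.snd ∈ W := by simpa using hd
    exact mem_coe.2 (mem_erase.2 ⟨d.snd_ne_fst, h⟩)
  · obtain ⟨h₁, -⟩ : d.fst = v ∧ d.snd ∈ W := by simpa using hd
    obtain ⟨h₁', -⟩ : d'.fst = v ∧ d'.snd ∈ W := by simpa using hd'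
    exact Dart.ext _ _ (Prod.ext (h₁.trans h₁'.symm) h)

lemma card_sideVerts_le_card_boundaryDarts (hA : IsSide ρ C A) (hρ : IsRotationSystem G ρ) :
    #(sideVerts ρ A) ≤ #(boundaryDarts ρ C A) := by
  refine card_le_card_of_surjOn (·.fst) fun v hv => ?_
  obtain ⟨d, hd, hdA, hdC⟩ := hA.exists_boundary hρ (mem_sideVerts.1 hv)
  exact ⟨d, mem_boundaryDarts.2 ⟨hdA, hdC⟩, hd⟩

lemma two_le_card_oppDarts_fst_eq (hA : IsSide ρ C A) (hρ : IsRotationSystem G ρ) {v : V}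
    (hv : v ∈ sideVerts ρ A) : 2 ≤ #{d ∈ oppDarts ρ C | d.fst = v} := by
  obtain ⟨d, hd, hdA, hdC⟩ := hA.exists_boundary hρ (mem_sideVerts.1 hv)
  obtain ⟨d', hd', hd'A, hd'C⟩ := hA.exists_outer hρ (mem_sideVerts.1 hv)
  refine one_lt_card.2 ⟨d, ?_, d', ?_, fun h => hd'A (h ▸ hdA)⟩ <;> simp [*]

lemma two_mul_card_sideVerts_le (hA : IsSide ρ C A) (hρ : IsRotationSystem G ρ) :
    2 * #(sideVerts ρ A) ≤ #{d ∈ oppDarts ρ C | d.fst ∈ sideVerts ρ A} := by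
  rw [card_eq_sum_card_fiberwise (f := (·.fst)) (t := sideVerts ρ A)
    (s := {d ∈ oppDarts ρ C | d.fst ∈ sideVerts ρ A}) fun d hd => (mem_filter.1 hd).2,
    mul_comm, ← smul_eq_mul]
  refine card_nsmul_le_sum _ _ _ fun v hv => (two_le_card_oppDarts_fst_eq hA hρ hv).trans
    (card_le_card fun d hd => ?_)
  simp only [mem_filter] at hd ⊢
  exact ⟨⟨hd.1, hd.2 ▸ hv⟩, hd.2⟩

lemma card_sideDarts (hA : IsSide ρ C A) :
    #(sideDarts ρ A) = #(innerDarts ρ A) + #(boundaryDarts ρ C A) := by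
  rw [← card_filter_add_card_filter_not (p := fun d => faceOf ρ d.symm ∈ A)]
  congr 2 <;> ext d <;> simp only [mem_filter, mem_sideDarts, mem_innerDarts, mem_boundaryDarts]
  refine and_congr_right fun hd => ⟨fun h => not_not.1 fun hC => h (hA.faceOf_symm_mem d hd hC),
    fun h h' => hA.not_mem (h ▸ h')⟩

/-- Two boundary darts on a common face coincide, and faces have length at least `3`. -/
lemma injOn_facePerm_pow_boundaryDarts (hρ : IsRotationSystem G ρ) (hs : DualSimple ρ) :
    Set.InjOn (fun p : G.Dart × ℕ => (facePerm ρ ^ p.2) p.1)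
      (boundaryDarts ρ C A ×ˢ range 3 : Finset (G.Dart × ℕ)) := by
  rintro ⟨d, k⟩ hdk ⟨d', k'⟩ hdk' h
  simp only [coe_product, coe_range, Set.mem_prod, mem_coe, mem_boundaryDarts] at hdk hdk' h
  obtain rfl : d = d' := hs.eq_of_faceOf_eq (by simpa using congrArg (faceOf ρ) h)
    (hdk.1.2.trans hdk'.1.2.symm)
  exact Prod.ext rfl (hs.facePerm_pow_injOn hρ d hdk.2 hdk'.2 h)

lemma three_mul_card_boundaryDarts_le (hρ : IsRotationSystem G ρ) (hs : DualSimple ρ) :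
    3 * #(boundaryDarts ρ C A) ≤ #(sideDarts ρ A) := by
  rw [mul_comm, ← card_range 3, ← card_product]
  refine card_le_card_of_injOn _ (fun p hp => ?_) (injOn_facePerm_pow_boundaryDarts hρ hs)
  simp only [coe_product, Set.mem_prod, mem_coe, mem_boundaryDarts] at hp
  simpa using hp.1.1

lemma card_innerDarts_add_card_edgeDarts_le (hA : IsSide ρ C A) (hρ : IsRotationSystem G ρ) :
    #(innerDarts ρ A) +
        #{d ∈ edgeDarts ρ C | d.fst ∈ sideVerts ρ A ∧ d.snd ∈ sideVerts ρ A} ≤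
      #(sideVerts ρ A) * #(sideVerts ρ A) - #(sideVerts ρ A) := by
  have hdisj : Disjoint (innerDarts ρ A)
      {d ∈ edgeDarts ρ C | d.fst ∈ sideVerts ρ A ∧ d.snd ∈ sideVerts ρ A} := by
    refine disjoint_left.2 fun d hd hd' => ?_
    simp only [mem_innerDarts, mem_filter, mem_edgeDarts] at hd hd'
    rcases hd'.1 with h | h
    · exact hA.not_mem (h ▸ hd.1)
    · exact hA.not_mem (h ▸ hd.2)
  rw [← card_union_of_disjoint hdisj]
  refine (card_le_card (union_subset (fun d hd => ?_) fun d hd => ?_)).trans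
    (card_darts_fst_snd_mem_le _)
  · rw [mem_innerDarts] at hd
    exact mem_filter.2 ⟨mem_univ _, fst_mem_sideVerts hd.1, snd_mem_sideVerts hρ hd.1⟩
  · exact mem_filter.2 ⟨mem_univ _, (mem_filter.1 hd).2⟩

lemma two_mul_card_boundaryDarts_le (hA : IsSide ρ C A) (hρ : IsRotationSystem G ρ) :
    2 * #(boundaryDarts ρ C A) ≤
      #{d ∈ edgeDarts ρ C | d.fst ∈ sideVerts ρ A ∧ d.snd ∈ sideVerts ρ A} := by
  have hdisj : Disjoint (boundaryDarts ρ C A) ((boundaryDarts ρ C A).image Dart.symm) := by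
    refine disjoint_left.2 fun d hd hd' => ?_
    obtain ⟨e, he, rfl⟩ := mem_image.1 hd'
    rw [mem_boundaryDarts] at hd he
    exact hA.not_mem (he.2 ▸ hd.1)
  calc 2 * #(boundaryDarts ρ C A)
      = #(boundaryDarts ρ C A ∪ (boundaryDarts ρ C A).image Dart.symm) := by
        rw [card_union_of_disjoint hdisj, card_image_of_injective _ Dart.symm_involutive.injective,
          two_mul]
    _ ≤ _ := ?_
  refine card_le_card (union_subset (fun d hd => ?_) fun d hd => ?_)
  · rw [mem_boundaryDarts] at hd
    simp [hd.2, fst_mem_sideVerts hd.1, snd_mem_sideVerts hρ hd.1]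
  · obtain ⟨e, he, rfl⟩ := mem_image.1 hd
    rw [mem_boundaryDarts] at he
    simp [he.2, fst_mem_sideVerts he.1, snd_mem_sideVerts hρ he.1]

/-- Reversal maps the darts of `edgeDarts ρ C` leaving `W` into those starting outside `W`. -/
lemma two_mul_card_oppDarts_le (hρ : IsRotationSystem G ρ) (hs : DualSimple ρ) (W : Finset V) :
    2 * #{d ∈ oppDarts ρ C | d.fst ∈ W} ≤
      #{d ∈ edgeDarts ρ C | d.fst ∈ W ∧ d.snd ∈ W} + 2 * #{d ∈ oppDarts ρ C | d.fst ∉ W} := by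
  have hsplit := card_filter_add_card_filter_not (s := {d ∈ edgeDarts ρ C | d.fst ∈ W})
    (fun d => d.snd ∈ W)
  have hcross : #{d ∈ {d ∈ edgeDarts ρ C | d.fst ∈ W} | d.snd ∉ W} ≤
      #{d ∈ edgeDarts ρ C | d.fst ∉ W} := by
    refine card_le_card_of_injOn (·.symm) (fun d hd => ?_) Dart.symm_involutive.injective.injOn
    rw [mem_coe, mem_filter, mem_filter, mem_edgeDarts] at hd
    rw [mem_coe, mem_filter, mem_edgeDarts, Dart.symm_symm, or_comm]
    exact ⟨hd.1.1, hd.2⟩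
  rw [filter_filter, card_edgeDarts_filter_fst hρ hs (· ∈ W)] at hsplit
  rw [card_edgeDarts_filter_fst hρ hs (· ∉ W)] at hcross
  omega

lemma symm_mem_innerDarts {d : G.Dart} (hd : d ∈ innerDarts ρ A) : d.symm ∈ innerDarts ρ A := by
  simpa [and_comm] using hd

/-- The face of a boundary dart meets `C` only along that dart. -/
lemma IsSide.facePerm_pow_mem_innerDarts (hA : IsSide ρ C A) (hρ : IsRotationSystem G ρ)
    (hs : DualSimple ρ) {e : G.Dart} (he : e ∈ boundaryDarts ρ C A) {j : ℕ} (hj : 0 < j)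
    (hj3 : j < 3) : (facePerm ρ ^ j) e ∈ innerDarts ρ A := by
  rw [mem_boundaryDarts] at he
  refine mem_innerDarts.2 ⟨by simpa using he.1, hA.faceOf_symm_mem _ (by simpa using he.1) ?_⟩
  exact fun hC => hs.facePerm_pow_apply_ne hρ e hj hj3
    (hs.eq_of_faceOf_eq (by simp) (hC.trans he.2.symm))

lemma exists_boundaryDarts_pow_eq (hρ : IsRotationSystem G ρ) (hs : DualSimple ρ)
    (htight : #(sideDarts ρ A) ≤ 3 * #(boundaryDarts ρ C A)) {d : G.Dart}
    (hd : faceOf ρ d ∈ A) : ∃ e ∈ boundaryDarts ρ C A, ∃ k < 3, (facePerm ρ ^ k) e = d := by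
  obtain ⟨⟨e, k⟩, hek, h⟩ := surj_on_of_inj_on_of_card_le
    (s := boundaryDarts ρ C A ×ˢ range 3) (t := sideDarts ρ A)
    (fun p _ => (facePerm ρ ^ p.2) p.1)
    (fun p hp => by simpa using (mem_boundaryDarts.1 (mem_product.1 hp).1).1)
    (fun p q hp hq h => injOn_facePerm_pow_boundaryDarts hρ hs hp hq h)
    (by rwa [card_product, card_range, mul_comm]) d (mem_sideDarts.2 hd)
  rw [mem_product, mem_range] at hek
  exact ⟨e, hek.1, k, hek.2, h.symm⟩

/-- When every face of `A` is a triangle `e, φ e, φ² e` with `e` on `C`, the triangle across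
`φ e` meets it along its own second edge: otherwise the vertex `(φ e).snd` would carry three
inner darts. -/
lemma IsSide.exists_pair (hA : IsSide ρ C A) (hρ : IsRotationSystem G ρ) (hs : DualSimple ρ)
    (htight : #(sideDarts ρ A) ≤ 3 * #(boundaryDarts ρ C A))
    (hinner : ∀ z ∈ sideVerts ρ A, #{d ∈ innerDarts ρ A | d.fst = z} ≤ 2)
    {e : G.Dart} (he : e ∈ boundaryDarts ρ C A) :
    ∃ e' ∈ boundaryDarts ρ C A, facePerm ρ e' = (facePerm ρ e).symm := by
  have hφe := symm_mem_innerDarts (hA.facePerm_pow_mem_innerDarts hρ hs he one_pos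
    (by norm_num))
  rw [pow_one] at hφe
  obtain ⟨e', he', k, hk, hke⟩ :=
    exists_boundaryDarts_pow_eq hρ hs htight (mem_innerDarts.1 hφe).1
  interval_cases k
  · rw [pow_zero, Equiv.Perm.one_apply] at hke
    subst hke
    exact absurd (mem_boundaryDarts.1 he').2 fun hC => hA.not_mem (hC ▸ (mem_innerDarts.1 hφe).2)
  · exact ⟨e', he', by simpa using hke⟩
  exfalso
  set z := (facePerm ρ e).snd
  have hu₁ := hA.facePerm_pow_mem_innerDarts hρ hs he two_pos (by norm_num)
  have hu₃ := symm_mem_innerDarts (hA.facePerm_pow_mem_innerDarts hρ hs he' one_pos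
    (by norm_num))
  rw [sq, Equiv.Perm.mul_apply] at hu₁ hke
  rw [pow_one] at hu₃
  have hz₁ : (facePerm ρ (facePerm ρ e)).fst = z := hρ.fst_facePerm _
  have hz₃ : (facePerm ρ e').symm.fst = z := by
    rw [Dart.symm_toProd, Prod.fst_swap, ← hρ.fst_facePerm, hke]
    rfl
  refine (hinner z (snd_mem_sideVerts hρ (mem_innerDarts.1 hφe).2)).not_gt
    (two_lt_card.2 ⟨_, mem_filter.2 ⟨hu₁, hz₁⟩, _, mem_filter.2 ⟨hφe, rfl⟩,
      _, mem_filter.2 ⟨hu₃, hz₃⟩, hs.facePerm_apply_ne_symm _, ?_, ?_⟩)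
  · intro h
    refine hρ.facePerm_apply_ne (facePerm ρ e) (hs.eq_of_faceOf_eq (by simp) ?_)
    rw [h, Dart.symm_symm, ← hke]
    simp
  · intro h
    obtain rfl := (facePerm ρ).injective (Dart.symm_involutive.injective h)
    exact hs.facePerm_apply_ne_symm _ hke

lemma IsSide.even_card_boundaryDarts (hA : IsSide ρ C A) (hρ : IsRotationSystem G ρ)
    (hs : DualSimple ρ) (htight : #(sideDarts ρ A) ≤ 3 * #(boundaryDarts ρ C A))
    (hinner : ∀ z ∈ sideVerts ρ A, #{d ∈ innerDarts ρ A | d.fst = z} ≤ 2) :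
    Even #(boundaryDarts ρ C A) := by
  choose! J hJ hφJ using fun e (he : e ∈ boundaryDarts ρ C A) =>
    hA.exists_pair hρ hs htight hinner he
  refine even_card_of_involution J hJ (fun e he => (facePerm ρ).injective ?_) fun e he h => ?_
  · rw [hφJ _ (hJ e he), hφJ e he, Dart.symm_symm]
  · exact (facePerm ρ e).symm_ne (h ▸ hφJ e he).symm

lemma card_innerDarts_fst_eq_add_four_le (hA : IsSide ρ C A) (hρ : IsRotationSystem G ρ)
    (hs : DualSimple ρ) (hout : #{d ∈ oppDarts ρ C | d.fst ∉ sideVerts ρ A} = 0) {z : V}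
    (hz : z ∈ sideVerts ρ A) :
    #{d ∈ innerDarts ρ A | d.fst = z} + 4 ≤ #(sideVerts ρ A) - 1 := by
  have hfst : ∀ d ∈ edgeDarts ρ C, d.fst ∈ sideVerts ρ A := by
    have h0 := card_edgeDarts_filter_fst hρ hs (· ∉ sideVerts ρ A) (C := C)
    rw [hout, mul_zero, card_eq_zero, filter_eq_empty_iff] at h0
    exact fun d hd => not_not.1 (h0 hd)
  have hdisj : Disjoint {d ∈ innerDarts ρ A | d.fst = z} {d ∈ edgeDarts ρ C | d.fst = z} := by
    refine disjoint_left.2 fun d hd hd' => ?_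
    simp only [mem_filter, mem_innerDarts, mem_edgeDarts] at hd hd'
    rcases hd'.1 with h | h
    · exact hA.not_mem (h ▸ hd.1.1)
    · exact hA.not_mem (h ▸ hd.1.2)
  have hedge : 4 ≤ #{d ∈ edgeDarts ρ C | d.fst = z} := by
    rw [card_edgeDarts_filter_fst hρ hs (· = z)]
    linarith [two_le_card_oppDarts_fst_eq hA hρ hz]
  calc #{d ∈ innerDarts ρ A | d.fst = z} + 4
      ≤ #({d ∈ innerDarts ρ A | d.fst = z} ∪ {d ∈ edgeDarts ρ C | d.fst = z}) := by
        rw [card_union_of_disjoint hdisj]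
        omega
    _ ≤ #{d : G.Dart | d.fst = z ∧ d.snd ∈ sideVerts ρ A} := by
        refine card_le_card (union_subset (fun d hd => ?_) fun d hd => ?_) <;>
          rw [mem_filter] at hd <;> refine mem_filter.2 ⟨mem_univ _, hd.2, ?_⟩
        · exact snd_mem_sideVerts hρ (mem_innerDarts.1 hd.1).1
        · exact hfst d.symm (by simpa [or_comm] using hd.1)
    _ ≤ #(sideVerts ρ A) - 1 := card_darts_fst_eq_snd_mem_le hz

theorem IsSide.fifteen_le_card_faceDarts (hA : IsSide ρ C A) (hρ : IsRotationSystem G ρ)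
    (hs : DualSimple ρ) : 15 ≤ #(faceDarts ρ C) := by
  obtain ⟨d, hd⟩ := hA.exists_faceOf_mem
  have hS : 0 < #(sideVerts ρ A) := card_pos.2 ⟨_, fst_mem_sideVerts hd⟩
  have h₁ := card_sideVerts_le_card_boundaryDarts hA hρ
  have h₂ := two_mul_card_sideVerts_le hA hρ
  have h₃ := card_filter_add_card_filter_not (s := oppDarts ρ C) (fun d => d.fst ∈ sideVerts ρ A)
  rw [card_oppDarts] at h₃
  have h₄ := card_sideDarts hA
  have h₅ := three_mul_card_boundaryDarts_le (C := C) (A := A) hρ hs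
  have h₆ := card_innerDarts_add_card_edgeDarts_le hA hρ
  have h₇ := two_mul_card_boundaryDarts_le hA hρ
  have h₈ := two_mul_card_oppDarts_le (C := C) hρ hs (sideVerts ρ A)
  by_contra! hlt
  obtain ⟨s, hcard⟩ : ∃ s, #(sideVerts ρ A) = s := ⟨_, rfl⟩
  rw [hcard] at hS h₁ h₂ h₆
  -- `s ≤ a` and `4 a ≤ s (s - 1)` give `5 ≤ s`, `2 s ≤ |C|` gives `s ≤ 7`, and `h₈` rules out
  -- `s = 5, 6`; for `s = 7` every inequality is tight.
  have hs7 : s = 7 := by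
    have : s ≤ 7 := by omega
    interval_cases s <;> omega
  subst hs7
  have hodd : ¬Even #(boundaryDarts ρ C A) := by
    rw [show #(boundaryDarts ρ C A) = 7 by omega]
    decide
  refine hodd (hA.even_card_boundaryDarts hρ hs (by omega) fun z hz => ?_)
  have := card_innerDarts_fst_eq_add_four_le hA hρ hs (by omega) hz
  omega

end Counting

end DualSep

open DualSep in
/-- Theorem 2 of Brinkmann–Noguchi–Van den Camp: in an embedding of a complete graph
`K_n`, `n ≥ 9`, with a simple dual, any cutface has length at least 15. -/
theorem stmt2 (n : ℕ) (hn : 9 ≤ n)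
    (ρ : Equiv.Perm (⊤ : SimpleGraph (Fin n)).Dart)
    (hρ : IsRotationSystem ⊤ ρ) (hsimple : DualSimple ρ)
    (C : Set (⊤ : SimpleGraph (Fin n)).Dart) (hC : IsCutface ρ C) :
    15 ≤ C.ncard := by
  classical
  have : Nontrivial (Fin n) := Fin.nontrivial_iff_two_le.2 (by omega)
  obtain ⟨A, hA⟩ := exists_isSide_of_isCutface hρ hsimple hC
  obtain ⟨c, rfl⟩ := hC.1
  convert hA.fifteen_le_card_faceDarts hρ hsimple
  rw [← Set.ncard_coe_finset]
  congr 1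
  ext d
  simp [mem_faceOf_iff]
end
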